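/- Let M be a positive integer, let G be an M×M complex matrix, and let R̃ be the 2M×2M skew-symmetric matrix [[0, G], [−G^T, 0]]. For S ⊆ {1,…,2M}, write O = S ∩ {1,…,M} and E = {s − M : s ∈ S, s > M}. If |O| = |E|, then |det R̃[S,S]| = |det G[O,E]|^2 (equivalently, the absolute value of the Pfaffian of R̃[S,S] equals |det G[O,E]|). If |O| ≠ |E|, then det R̃[S,S] = 0. -/

import Mathlib

open scoped BigOperators Matrix

/-- The square submatrix of `A` with rows indexed by `I` and columns indexed by `J`
(both in increasing order), as a determinant; it is `0` if `I.card ≠ J.card`. -/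
noncomputable def subdetC {N : ℕ} (A : Matrix (Fin N) (Fin N) ℂ) (I J : Finset (Fin N)) : ℂ :=
  if h : J.card = I.card then
    Matrix.det (Matrix.of fun a b : Fin I.card =>
      A (I.orderEmbOfFin rfl a) (J.orderEmbOfFin h b))
  else 0

/-- The canonical identification `Fin M ⊕ Fin M ≃ Fin (2M)` sending the first
summand to `{1,…,M}` and the second to `{M+1,…,2M}`. -/
def halfEquiv (M : ℕ) : Fin M ⊕ Fin M ≃ Fin (2 * M) :=
  finSumFinEquiv.trans (finCongr (two_mul M).symm)

/-- The `2M × 2M` skew-symmetric block matrix `R̃ = [[0, G], [-Gᵀ, 0]]`. -/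
def checkerBlock {M : ℕ} (G : Matrix (Fin M) (Fin M) ℂ) :
    Matrix (Fin (2 * M)) (Fin (2 * M)) ℂ :=
  Matrix.reindex (halfEquiv M) (halfEquiv M) (Matrix.fromBlocks 0 G (-Gᵀ) 0)

/-- `O = S ∩ {1,…,M}`, viewed inside `Fin M`. -/
def firstHalf (M : ℕ) (S : Finset (Fin (2 * M))) : Finset (Fin M) :=
  Finset.univ.filter fun i => halfEquiv M (Sum.inl i) ∈ S

/-- `E = {s - M : s ∈ S, s > M}`, viewed inside `Fin M`. -/
def secondHalf (M : ℕ) (S : Finset (Fin (2 * M))) : Finset (Fin M) :=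
  Finset.univ.filter fun i => halfEquiv M (Sum.inr i) ∈ S

/-!
Listing `S` as `O` followed by `E` only permutes rows and columns simultaneously, which leaves
the principal minor unchanged, so `det R̃[S,S] = det [[0, B], [-Bᵀ, 0]]` with `B = G[O,E]` of
size `|O| × |E|`. If `|O| = |E|`, then `[[0, B], [-Bᵀ, 0]] = J · diag(-Bᵀ, -B)` with the symplectic
`J` of determinant `1`, so the minor is `(det B)²`. If `|O| ≠ |E|`, the block matrix factors
through a space of dimension `2 min(|O|, |E|) < |O| + |E|`, so it is singular.
-/

open Matrix

lemma det_mul_eq_zero_of_card_lt {K m n : Type*} [Field K] [Fintype m] [Fintype n]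
    [DecidableEq n] (A : Matrix n m K) (B : Matrix m n K)
    (h : Fintype.card m < Fintype.card n) :
    (A * B).det = 0 := by
  by_contra hdet
  have hrank := (A * B).rank_of_isUnit ((isUnit_iff_isUnit_det _).2 (Ne.isUnit hdet))
  have := (A.rank_mul_le_left B).trans A.rank_le_card_width
  omega

lemma det_fromBlocks_zero_zero_of_card_ne {K m n : Type*} [Field K] [Fintype m] [Fintype n]
    [DecidableEq m] [DecidableEq n] (B : Matrix m n K) (C : Matrix n m K)
    (h : Fintype.card m ≠ Fintype.card n) :
    (fromBlocks 0 B C 0).det = 0 := by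
  rcases h.lt_or_gt with h | h
  · have hBC := fromBlocks_multiply (1 : Matrix m m K) (0 : Matrix m m K) 0 C
      (0 : Matrix m m K) B 1 0
    simp only [Matrix.one_mul, Matrix.mul_one, Matrix.zero_mul, Matrix.mul_zero, add_zero,
      zero_add] at hBC
    rw [← hBC]
    exact det_mul_eq_zero_of_card_lt _ _ (by simp only [Fintype.card_sum]; omega)
  · have hBC := fromBlocks_multiply B (0 : Matrix m n K) 0 (1 : Matrix n n K)
      (0 : Matrix n m K) (1 : Matrix n n K) C 0
    simp only [Matrix.one_mul, Matrix.mul_one, Matrix.zero_mul, Matrix.mul_zero, add_zero,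
      zero_add] at hBC
    rw [← hBC]
    exact det_mul_eq_zero_of_card_lt _ _ (by simp only [Fintype.card_sum]; omega)

lemma det_fromBlocks_zero_neg_transpose {R n : Type*} [CommRing R] [Fintype n] [DecidableEq n]
    (B : Matrix n n R) : (fromBlocks 0 B (-Bᵀ) 0).det = B.det ^ 2 := by
  have hJ : fromBlocks 0 B (-Bᵀ) 0 = J n R * fromBlocks (-Bᵀ) 0 0 (-B) := by
    rw [J, fromBlocks_multiply]
    simp
  rw [hJ, det_mul, SymplecticGroup.det_eq_one (SymplecticGroup.J_mem n R),
    det_fromBlocks_zero₂₁, det_neg, det_neg, det_transpose, one_mul, mul_mul_mul_comm,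
    ← mul_pow, neg_one_mul, neg_neg, one_pow, one_mul, sq]

lemma subdetC_eq_det_submatrix {N : ℕ} (A : Matrix (Fin N) (Fin N) ℂ) (I J : Finset (Fin N))
    (h : J.card = I.card) :
    subdetC A I J = (A.submatrix (I.orderEmbOfFin rfl) (J.orderEmbOfFin h)).det :=
  dif_pos h

lemma subdetC_self_eq_det_submatrix_coe {N : ℕ} (A : Matrix (Fin N) (Fin N) ℂ)
    (S : Finset (Fin N)) :
    subdetC A S S = (A.submatrix ((↑) : S → Fin N) (↑)).det := by
  rw [subdetC_eq_det_submatrix _ _ _ rfl,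
    ← det_submatrix_equiv_self (S.orderIsoOfFin rfl).toEquiv]
  rfl

def halvesEquiv (M : ℕ) (S : Finset (Fin (2 * M))) :
    firstHalf M S ⊕ secondHalf M S ≃ S :=
  ((Equiv.subtypeEquivRight fun _ => by simp [firstHalf]).sumCongr
      (Equiv.subtypeEquivRight fun _ => by simp [secondHalf])).trans
    (Equiv.subtypeSum.symm.trans ((halfEquiv M).subtypeEquiv fun _ => Iff.rfl))

@[simp]
lemma coe_halvesEquiv_inl (M : ℕ) (S : Finset (Fin (2 * M))) (i : firstHalf M S) :
    (halvesEquiv M S (Sum.inl i) : Fin (2 * M)) = halfEquiv M (Sum.inl i) := rfl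

@[simp]
lemma coe_halvesEquiv_inr (M : ℕ) (S : Finset (Fin (2 * M))) (j : secondHalf M S) :
    (halvesEquiv M S (Sum.inr j) : Fin (2 * M)) = halfEquiv M (Sum.inr j) := rfl

lemma subdetC_checkerBlock {M k m : ℕ} (G : Matrix (Fin M) (Fin M) ℂ)
    (S : Finset (Fin (2 * M))) (hk : (firstHalf M S).card = k)
    (hm : (secondHalf M S).card = m) :
    subdetC (checkerBlock G) S S =
      (fromBlocks 0 (G.submatrix ((firstHalf M S).orderEmbOfFin hk)
          ((secondHalf M S).orderEmbOfFin hm))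
        (-(G.submatrix ((firstHalf M S).orderEmbOfFin hk)
          ((secondHalf M S).orderEmbOfFin hm))ᵀ) 0).det := by
  rw [subdetC_self_eq_det_submatrix_coe, ← det_submatrix_equiv_self
    ((((firstHalf M S).orderIsoOfFin hk).toEquiv.sumCongr
      ((secondHalf M S).orderIsoOfFin hm).toEquiv).trans (halvesEquiv M S))]
  congr 1
  ext (i | i) (j | j) <;> simp [checkerBlock]

lemma subdetC_checkerBlock_of_card_eq {M : ℕ} (G : Matrix (Fin M) (Fin M) ℂ)
    (S : Finset (Fin (2 * M))) (h : (firstHalf M S).card = (secondHalf M S).card) :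
    subdetC (checkerBlock G) S S = subdetC G (firstHalf M S) (secondHalf M S) ^ 2 := by
  rw [subdetC_checkerBlock G S rfl h.symm, det_fromBlocks_zero_neg_transpose,
    subdetC_eq_det_submatrix _ _ _ h.symm]

lemma subdetC_checkerBlock_of_card_ne {M : ℕ} (G : Matrix (Fin M) (Fin M) ℂ)
    (S : Finset (Fin (2 * M))) (h : (firstHalf M S).card ≠ (secondHalf M S).card) :
    subdetC (checkerBlock G) S S = 0 := by
  rw [subdetC_checkerBlock G S rfl rfl]
  exact det_fromBlocks_zero_zero_of_card_ne _ _ (by simpa using h)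

theorem checkerBlock_pfaffian_minors_general (M : ℕ)
    (G : Matrix (Fin M) (Fin M) ℂ) (S : Finset (Fin (2 * M))) :
    ((firstHalf M S).card = (secondHalf M S).card →
      ‖subdetC (checkerBlock G) S S‖ =
        ‖subdetC G (firstHalf M S) (secondHalf M S)‖ ^ 2) ∧
    ((firstHalf M S).card ≠ (secondHalf M S).card →
      subdetC (checkerBlock G) S S = 0) :=
  ⟨fun h => by rw [subdetC_checkerBlock_of_card_eq G S h, norm_pow],
    subdetC_checkerBlock_of_card_ne G S⟩

/-- **Principal Pfaffian minors of the block matrix `R̃ = [[0, G], [-Gᵀ, 0]]`.**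
For `S ⊆ {1,…,2M}` with `O = S ∩ {1,…,M}` and `E = {s-M : s ∈ S, s > M}`:
if `|O| = |E|` then `|det R̃[S,S]| = |det G[O,E]|²` (i.e. the absolute value of
the Pfaffian of `R̃[S,S]` equals `|det G[O,E]|`), while if `|O| ≠ |E|` then
`det R̃[S,S] = 0`. -/
theorem checkerBlock_pfaffian_minors (M : ℕ) (hM : 0 < M)
    (G : Matrix (Fin M) (Fin M) ℂ) (S : Finset (Fin (2 * M))) :
    ((firstHalf M S).card = (secondHalf M S).card →
      ‖subdetC (checkerBlock G) S S‖ =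
        ‖subdetC G (firstHalf M S) (secondHalf M S)‖ ^ 2) ∧
    ((firstHalf M S).card ≠ (secondHalf M S).card →
      subdetC (checkerBlock G) S S = 0) :=
  checkerBlock_pfaffian_minors_general M G S
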